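/- Let g ≥ 1. The group G_g is isomorphic to the semidirect product (ℤ × ℤ^g) ⋊_φ ℤ^g, where φ(n) sends (p, m) ∈ ℤ × ℤ^g to (p − 2∑_{j=1}^g n_j m_j, m); under this isomorphism σ corresponds to a generator of the central factor ℤ, a_1,…,a_g to the standard basis of the second factor ℤ^g, and b_1,…,b_g to the standard basis of the acting factor ℤ^g. In particular G_g is a central extension of ℤ^{2g} by ℤ. -/

import Mathlib

/-- Generators of the group `G_g`: `a i`, `b i` for `i : Fin g`, and `s` (= σ). -/
inductive GGGen (g : ℕ) : Type
  | a : Fin g → GGGen g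
  | b : Fin g → GGGen g
  | s : GGGen g

/-- Relators of `G_g`: the generators commute pairwise except the pairs
`(a_i, b_i)`, and `[a_i, b_i] = σ²`. -/
def GgRels (g : ℕ) : Set (FreeGroup (GGGen g)) :=
  {r | ∃ x y : GGGen g, (∀ i : Fin g, ¬((x = .a i ∧ y = .b i) ∨ (x = .b i ∧ y = .a i))) ∧
      r = .of x * .of y * (.of x)⁻¹ * (.of y)⁻¹} ∪
  {r | ∃ i : Fin g,
      r = .of (.a i) * .of (.b i) * (.of (.a i))⁻¹ * (.of (.b i))⁻¹ * ((.of .s) ^ 2)⁻¹}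

/-- The group `G_g`, as a presented group. -/
abbrev GGroup (g : ℕ) := PresentedGroup (GgRels g)


/-- For `n ∈ ℤ^g`, the additive automorphism of `ℤ × ℤ^g` sending
`(p, m)` to `(p - 2∑ⱼ nⱼmⱼ, m)`. -/
def ggTwist (g : ℕ) (n : Fin g → ℤ) : (ℤ × (Fin g → ℤ)) ≃+ (ℤ × (Fin g → ℤ)) where
  toFun x := (x.1 - 2 * ∑ j, n j * x.2 j, x.2)
  invFun x := (x.1 + 2 * ∑ j, n j * x.2 j, x.2)
  left_inv x := by ext <;> simp
  right_inv x := by ext <;> simp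
  map_add' x y := by
    ext
    · simp [Finset.sum_add_distrib, mul_add]; ring
    · simp

/-- The action of `ℤ^g` on `ℤ × ℤ^g` defining the semidirect product
`(ℤ × ℤ^g) ⋊ ℤ^g`, written multiplicatively. -/
def ggTwistHom (g : ℕ) :
    Multiplicative (Fin g → ℤ) →* MulAut (Multiplicative (ℤ × (Fin g → ℤ))) where
  toFun n := AddEquiv.toMultiplicative (ggTwist g n.toAdd)
  map_one' := by
    ext x <;> simp [ggTwist, AddEquiv.toMultiplicative]
  map_mul' n m := by
    ext x
    · simp [ggTwist, AddEquiv.toMultiplicative, add_mul]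
      rw [Finset.sum_add_distrib]
      ring
    · simp [ggTwist, AddEquiv.toMultiplicative]

/-!
Sending `σ ↦ (1, 0)`, `aᵢ ↦ (0, eᵢ)` and `bᵢ ↦ eᵢ` respects the relations: the twist by `eⱼ`
fixes `(1, 0)` and `(0, eᵢ)` for `i ≠ j`, and the commutator of `(0, eᵢ)` with `eᵢ` is `(2, 0)`.
Conversely `σ` is central and the `aᵢ`, resp. the `bᵢ`, commute, so `(p, m) ↦ σ ^ p * ∏ aᵢ ^ mᵢ`
and `n ↦ ∏ bᵢ ^ nᵢ` are homomorphisms; they glue to a homomorphism on the semidirect product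
because conjugation by `∏ bᵢ ^ nᵢ` multiplies `∏ aᵢ ^ mᵢ` by `σ ^ (-2 ∑ nᵢ mᵢ)`. Both composites
fix the generators.
-/

open Multiplicative

section

variable {G : Type*} [Group G] {ι : Type*} [Fintype ι] [DecidableEq ι]

def piZPowersHom (x : ι → G) (hx : Pairwise fun i j => Commute (x i) (x j)) :
    Multiplicative (ι → ℤ) →* G :=
  (MonoidHom.noncommPiCoprod (fun i => zpowersHom G (x i))
    fun _ _ hij _ _ => (hx hij).zpow_zpow _ _).comp
      (MulEquiv.piMultiplicative _).toMonoidHom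

theorem piZPowersHom_single (x : ι → G) (hx : Pairwise fun i j => Commute (x i) (x j))
    (i : ι) : piZPowersHom x hx (ofAdd (Pi.single i 1)) = x i := by
  have h : MulEquiv.piMultiplicative _ (ofAdd (Pi.single i 1 : ι → ℤ)) =
      Pi.mulSingle i (ofAdd 1) := by
    ext j
    by_cases hj : j = i <;> simp [hj]
  rw [piZPowersHom, MonoidHom.comp_apply, MulEquiv.coe_toMonoidHom, h]
  exact (MonoidHom.noncommPiCoprod_mulSingle (fun i => zpowersHom G (x i)) i (ofAdd 1)).trans
    (zpow_one (x i))

theorem MonoidHom.ext_multiplicative_pi {M : Type*} [Monoid M]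
    {f f' : Multiplicative (ι → ℤ) →* M}
    (h : ∀ i, f (ofAdd (Pi.single i 1)) = f' (ofAdd (Pi.single i 1))) : f = f' := by
  refine MonoidHom.toAdditiveRight.injective <| AddMonoidHom.pi_ext fun i n => ?_
  have hi := AddMonoidHom.ext_int
    (f := (MonoidHom.toAdditiveRight f).comp (AddMonoidHom.single (fun _ => ℤ) i))
    (g := (MonoidHom.toAdditiveRight f').comp (AddMonoidHom.single (fun _ => ℤ) i))
    (by simpa using h i)
  exact DFunLike.congr_fun hi n

theorem MonoidHom.ext_multiplicative_int_prod_pi {M : Type*} [Monoid M]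
    {f f' : Multiplicative (ℤ × (ι → ℤ)) →* M} (h₀ : f (ofAdd (1, 0)) = f' (ofAdd (1, 0)))
    (h : ∀ i, f (ofAdd (0, Pi.single i 1)) = f' (ofAdd (0, Pi.single i 1))) : f = f' := by
  have hfst : ∀ p : ℤ, f (ofAdd (p, 0)) = f' (ofAdd (p, 0)) := fun p =>
    DFunLike.congr_fun (MonoidHom.ext_mint
      (f := f.comp (AddMonoidHom.inl ℤ (ι → ℤ)).toMultiplicative)
      (g := f'.comp (AddMonoidHom.inl ℤ (ι → ℤ)).toMultiplicative) h₀) (ofAdd p)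
  have hsnd : ∀ m : ι → ℤ, f (ofAdd (0, m)) = f' (ofAdd (0, m)) := fun m =>
    DFunLike.congr_fun (MonoidHom.ext_multiplicative_pi
      (f := f.comp (AddMonoidHom.inr ℤ (ι → ℤ)).toMultiplicative)
      (f' := f'.comp (AddMonoidHom.inr ℤ (ι → ℤ)).toMultiplicative) h) (ofAdd m)
  refine MonoidHom.ext fun u => ?_
  have hu : u = ofAdd (u.toAdd.1, 0) * ofAdd (0, u.toAdd.2) := by simp [← ofAdd_add]
  rw [hu, map_mul, map_mul, hfst, hsnd]

def MonoidHom.mulCentralZPow {A : Type*} [AddGroup A] (z : G) (hz : ∀ y, Commute z y)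
    (χ : A →+ ℤ) (f : Multiplicative A →* G) : Multiplicative A →* G where
  toFun u := z ^ χ u.toAdd * f u
  map_one' := by simp
  map_mul' u w := by
    simp only [toAdd_mul, map_add, zpow_add, map_mul, mul_assoc]
    exact congrArg (z ^ χ u.toAdd * ·) (((hz _).zpow_left _).left_comm _)

end

theorem SemidirectProduct.inl_mul_inr_mul_inl_inv_mul_inr_inv {N H : Type*} [Group N] [Group H]
    {φ : H →* MulAut N} (n : N) (h : H) :
    (inl n : N ⋊[φ] H) * inr h * (inl n)⁻¹ * (inr h)⁻¹ = inl (n * (φ h n)⁻¹) := by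
  ext <;> simp

theorem ggTwistHom_apply {g : ℕ} (v : Multiplicative (Fin g → ℤ))
    (u : Multiplicative (ℤ × (Fin g → ℤ))) :
    ggTwistHom g v u = ofAdd (u.toAdd.1 - 2 * ∑ j, v.toAdd j * u.toAdd.2 j, u.toAdd.2) := rfl

namespace GGroup

variable {g : ℕ}

def σ : GGroup g := PresentedGroup.of .s
def a (i : Fin g) : GGroup g := PresentedGroup.of (.a i)
def b (i : Fin g) : GGroup g := PresentedGroup.of (.b i)

theorem commute_of_of {x y : GGGen g}
    (hxy : ∀ i : Fin g, ¬((x = .a i ∧ y = .b i) ∨ (x = .b i ∧ y = .a i))) :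
    Commute (PresentedGroup.of (rels := GgRels g) x) (PresentedGroup.of y) := by
  have h := PresentedGroup.one_of_mem (rels := GgRels g) (Or.inl ⟨x, y, hxy, rfl⟩)
  simp only [map_mul, map_inv] at h
  exact commutatorElement_eq_one_iff_commute.mp h

theorem a_mul_b_mul_a_inv_mul_b_inv (i : Fin g) : a i * b i * (a i)⁻¹ * (b i)⁻¹ = σ ^ 2 := by
  have h := PresentedGroup.one_of_mem (rels := GgRels g) (Or.inr ⟨i, rfl⟩)
  simp only [map_mul, map_inv, map_pow] at h
  exact mul_inv_eq_one.mp h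

theorem commute_σ (y : GGroup g) : Commute σ y := by
  refine (Subgroup.mem_centralizer_singleton_iff.mp ?_).symm
  exact PresentedGroup.generated_by _ _ (fun x => Subgroup.mem_centralizer_singleton_iff.mpr
    (commute_of_of (x := .s) (y := x) (by simp)).symm.eq) y

theorem a_mul_b_mul_a_inv (i j : Fin g) :
    a i * b j * (a i)⁻¹ = σ ^ (2 * (Pi.single j 1 : Fin g → ℤ) i) * b j := by
  by_cases hij : i = j
  · subst hij
    rw [← mul_inv_eq_iff_eq_mul, a_mul_b_mul_a_inv_mul_b_inv]
    simp
  · have hab : a i * b j = b j * a i :=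
      (commute_of_of (x := .a i) (y := .b j) (by simp [Ne.symm hij])).eq
    simp [hab, hij]

def aHom : Multiplicative (Fin g → ℤ) →* GGroup g :=
  piZPowersHom a fun _ _ _ => commute_of_of (by simp)

def bHom : Multiplicative (Fin g → ℤ) →* GGroup g :=
  piZPowersHom b fun _ _ _ => commute_of_of (by simp)

theorem aHom_single (i : Fin g) : aHom (ofAdd (Pi.single i 1)) = a i :=
  piZPowersHom_single _ _ i

theorem bHom_single (i : Fin g) : bHom (ofAdd (Pi.single i 1)) = b i :=
  piZPowersHom_single _ _ i

def leftHom : Multiplicative (ℤ × (Fin g → ℤ)) →* GGroup g :=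
  MonoidHom.mulCentralZPow σ commute_σ (AddMonoidHom.fst _ _)
    (aHom.comp (AddMonoidHom.snd _ _).toMultiplicative)

theorem leftHom_apply (u : Multiplicative (ℤ × (Fin g → ℤ))) :
    leftHom u = σ ^ u.toAdd.1 * aHom (ofAdd u.toAdd.2) := rfl

theorem a_mul_bHom_mul_a_inv (j : Fin g) (v : Multiplicative (Fin g → ℤ)) :
    a j * bHom v * (a j)⁻¹ = σ ^ (2 * v.toAdd j) * bHom v := by
  -- both sides are homomorphisms in `v`, the right one because `σ` is central
  have h : (MulAut.conj (a j)).toMonoidHom.comp bHom =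
      MonoidHom.mulCentralZPow σ commute_σ (2 • Pi.evalAddMonoidHom _ j) bHom :=
    MonoidHom.ext_multiplicative_pi fun i => by
      simp [bHom_single, a_mul_b_mul_a_inv, MonoidHom.mulCentralZPow]
  exact DFunLike.congr_fun h v

theorem bHom_mul_a_mul_bHom_inv (v : Multiplicative (Fin g → ℤ)) (j : Fin g) :
    bHom v * a j * (bHom v)⁻¹ = σ ^ (-(2 * v.toAdd j)) * a j := by
  have h := a_mul_bHom_mul_a_inv j v
  rw [mul_inv_eq_iff_eq_mul] at h ⊢
  rw [zpow_neg, mul_assoc, eq_inv_mul_iff_mul_eq, ← mul_assoc, ← h]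

theorem leftHom_comp_ggTwistHom (v : Multiplicative (Fin g → ℤ)) :
    leftHom.comp (ggTwistHom g v).toMonoidHom =
      (MulAut.conj (bHom v)).toMonoidHom.comp leftHom := by
  refine MonoidHom.ext_multiplicative_int_prod_pi ?_ fun j => ?_
  · simp [ggTwistHom_apply, leftHom_apply, ← (commute_σ _).eq]
  · simp [ggTwistHom_apply, leftHom_apply, aHom_single, bHom_mul_a_mul_bHom_inv,
      Pi.single_apply]

abbrev Model (g : ℕ) :=
  Multiplicative (ℤ × (Fin g → ℤ)) ⋊[ggTwistHom g] Multiplicative (Fin g → ℤ)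

def genImage : GGGen g → Model g
  | .a i => .inl (ofAdd (0, Pi.single i 1))
  | .b i => .inr (ofAdd (Pi.single i 1))
  | .s => .inl (ofAdd (1, 0))

theorem commute_genImage {x y : GGGen g}
    (hxy : ∀ i : Fin g, ¬((x = .a i ∧ y = .b i) ∨ (x = .b i ∧ y = .a i))) :
    Commute (genImage x) (genImage y) := by
  -- both in one abelian factor, or the twist by `eⱼ` fixes `(1, 0)` and `(0, eᵢ)` for `i ≠ j`
  cases x <;> cases y <;> ext <;>
    simp [genImage, ggTwistHom_apply, Pi.single_apply] <;> grind

theorem genImage_a_mul_b_mul_inv_mul_inv (i : Fin g) :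
    genImage (.a i) * genImage (.b i) * (genImage (.a i))⁻¹ * (genImage (.b i))⁻¹ =
      genImage .s ^ 2 := by
  rw [genImage, genImage, genImage, SemidirectProduct.inl_mul_inr_mul_inl_inv_mul_inr_inv,
    ← map_pow, ggTwistHom_apply]
  congr 1
  ext <;> simp [Pi.single_apply]

theorem genImage_rels : ∀ r ∈ GgRels g, FreeGroup.lift genImage r = 1 := by
  rintro r (⟨x, y, hxy, rfl⟩ | ⟨i, rfl⟩) <;>
    simp only [map_mul, map_inv, map_pow, FreeGroup.lift_apply_of]
  · exact commutatorElement_eq_one_iff_commute.mpr (commute_genImage hxy)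
  · exact mul_inv_eq_one.mpr (genImage_a_mul_b_mul_inv_mul_inv i)

def toModel : GGroup g →* Model g := PresentedGroup.toGroup genImage_rels

def ofModel : Model g →* GGroup g := SemidirectProduct.lift leftHom bHom leftHom_comp_ggTwistHom

theorem toModel_σ : toModel (σ : GGroup g) = .inl (ofAdd (1, 0)) :=
  PresentedGroup.toGroup.of genImage_rels

theorem toModel_a (i : Fin g) : toModel (a i) = .inl (ofAdd (0, Pi.single i 1)) :=
  PresentedGroup.toGroup.of genImage_rels

theorem toModel_b (i : Fin g) : toModel (b i) = .inr (ofAdd (Pi.single i 1)) :=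
  PresentedGroup.toGroup.of genImage_rels

theorem ofModel_comp_toModel : (ofModel (g := g)).comp toModel = MonoidHom.id _ :=
  PresentedGroup.ext fun
    | .a i => show ofModel (toModel (a i)) = a i by
        simp [toModel_a, ofModel, leftHom_apply, aHom_single]
    | .b i => show ofModel (toModel (b i)) = b i by simp [toModel_b, ofModel, bHom_single]
    | .s => show ofModel (toModel σ) = σ by simp [toModel_σ, ofModel, leftHom_apply]

theorem toModel_comp_ofModel : (toModel (g := g)).comp ofModel = MonoidHom.id _ :=
  SemidirectProduct.hom_ext
    (MonoidHom.ext_multiplicative_int_prod_pi (by simp [ofModel, leftHom_apply, toModel_σ])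
      fun i => by simp [ofModel, leftHom_apply, aHom_single, toModel_a])
    (MonoidHom.ext_multiplicative_pi fun i => by simp [ofModel, bHom_single, toModel_b])

end GGroup

theorem stmt8_general (g : ℕ) :
    ∃ φ : GGroup g ≃*
        (Multiplicative (ℤ × (Fin g → ℤ)) ⋊[ggTwistHom g] Multiplicative (Fin g → ℤ)),
      φ (PresentedGroup.of .s) = SemidirectProduct.inl (Multiplicative.ofAdd (1, 0)) ∧
      (∀ i : Fin g, φ (PresentedGroup.of (.a i)) =
        SemidirectProduct.inl (Multiplicative.ofAdd (0, Pi.single i 1))) ∧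
      (∀ i : Fin g, φ (PresentedGroup.of (.b i)) =
        SemidirectProduct.inr (Multiplicative.ofAdd (Pi.single i 1))) :=
  ⟨GGroup.toModel.toMulEquiv GGroup.ofModel GGroup.ofModel_comp_toModel
      GGroup.toModel_comp_ofModel,
    GGroup.toModel_σ, GGroup.toModel_a, GGroup.toModel_b⟩

/-- `G_g ≅ (ℤ × ℤ^g) ⋊ ℤ^g`. -/
theorem stmt8 (g : ℕ) (hg : 1 ≤ g) :
    ∃ φ : GGroup g ≃*
        (Multiplicative (ℤ × (Fin g → ℤ)) ⋊[ggTwistHom g] Multiplicative (Fin g → ℤ)),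
      φ (PresentedGroup.of .s) = SemidirectProduct.inl (Multiplicative.ofAdd (1, 0)) ∧
      (∀ i : Fin g, φ (PresentedGroup.of (.a i)) =
        SemidirectProduct.inl (Multiplicative.ofAdd (0, Pi.single i 1))) ∧
      (∀ i : Fin g, φ (PresentedGroup.of (.b i)) =
        SemidirectProduct.inr (Multiplicative.ofAdd (Pi.single i 1))) :=
  stmt8_general g
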